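/- Let A = ρĀ with Ā symmetric stochastic, 0 < ρ < 1, and Σ_x = σ²_gap I + β𝟏𝟏ᵀ + Σ̄ with σ²_gap > 0 and all entries of Σ̄ bounded: the off-diagonal oscillation of Σ_x satisfies Osc(Off(Σ_x))/σ²_gap ≤ A⁺_min (1 − ρ²)/(2ρ(ρ² + 1)), where A⁺_min is the smallest nonzero entry of A. Then the limiting error E = (1/σ²_gap)[βρ𝟏𝟏ᵀ + (I − A²) Σ_{i=0}^∞ A^{i+1} Σ̄ A^i] has off-diagonal oscillation at most A⁺_min/2. -/

import Mathlib

open Matrix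

/-- The all-ones matrix `𝟏𝟏ᵀ`. -/
def onesMat (N : ℕ) : Matrix (Fin N) (Fin N) ℝ := Matrix.of fun _ _ => (1 : ℝ)

/-!
Write `A = ρ Ā`; since `Ā` is symmetric and stochastic it is doubly stochastic, and so are its
powers. Hence `A^(k+1) Σ̄ A^k = ρ^(2k+1) Ā^(k+1) Σ̄ Ā^k` has every entry in the interval
`[lo, lo + Osc]` spanned by the entries of `Σ̄`, scaled by `ρ^(2k+1)`. Summing the geometric
series, every entry of `T = ∑ A^(k+1) Σ̄ A^k` and of `Ā² T` lies in an interval of length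
`ρ Osc / (1 - ρ²)`, so `(I - A²) T = T - ρ² Ā² T` has oscillation at most
`(1 + ρ²) ρ Osc / (1 - ρ²)`. The constant matrix `βρ𝟏𝟏ᵀ` does not change oscillations, and after
dividing by `σ²_gap` the hypothesis makes this at most `A⁺_min / 2`.
-/

open Set

lemma exists_forall_mem_Icc_of_forall_sub_le {α : Type*} [Finite α] [Nonempty α] (f : α → ℝ)
    {d : ℝ} (h : ∀ x y, f x - f y ≤ d) : ∃ lo, ∀ x, f x ∈ Icc lo (lo + d) := by
  obtain ⟨x₀, hx₀⟩ := Finite.exists_min f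
  exact ⟨f x₀, fun x => ⟨hx₀ x, by linarith [h x x₀]⟩⟩

lemma summable_mul_of_mem_Icc {ι : Type*} {w g : ι → ℝ} (hw : ∀ n, 0 ≤ w n) (hws : Summable w)
    {lo hi : ℝ} (hg : ∀ n, g n ∈ Icc lo hi) : Summable (fun n => w n * g n) :=
  (hws.mul_right (max |lo| |hi|)).of_norm_bounded fun n => by
    rw [norm_mul, Real.norm_of_nonneg (hw n), Real.norm_eq_abs]
    exact mul_le_mul_of_nonneg_left (abs_le_max_abs_abs (hg n).1 (hg n).2) (hw n)

lemma tsum_mul_mem_Icc {ι : Type*} {w g : ι → ℝ} (hw : ∀ n, 0 ≤ w n) (hws : Summable w)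
    {lo hi : ℝ} (hg : ∀ n, g n ∈ Icc lo hi) :
    ∑' n, w n * g n ∈ Icc ((∑' n, w n) * lo) ((∑' n, w n) * hi) := by
  have hs := summable_mul_of_mem_Icc hw hws hg
  rw [← tsum_mul_right, ← tsum_mul_right]
  exact ⟨(hws.mul_right lo).tsum_le_tsum (fun n => mul_le_mul_of_nonneg_left (hg n).1 (hw n)) hs,
    hs.tsum_le_tsum (fun n => mul_le_mul_of_nonneg_left (hg n).2 (hw n)) (hws.mul_right hi)⟩

lemma hasSum_pow_two_mul_add_one {ρ : ℝ} (h0 : 0 ≤ ρ) (h1 : ρ < 1) :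
    HasSum (fun n : ℕ => ρ ^ (2 * n + 1)) (ρ / (1 - ρ ^ 2)) := by
  have he : (fun n : ℕ => ρ ^ (2 * n + 1)) = fun n => ρ * (ρ ^ 2) ^ n := by
    funext n; rw [← pow_mul]; ring
  rw [he, div_eq_mul_inv]
  exact (hasSum_geometric_of_lt_one (sq_nonneg ρ) (by nlinarith)).mul_left ρ

namespace Matrix

lemma tsum_smul_apply_mem_Icc {ι m n : Type*} {w : ι → ℝ} (hw : ∀ k, 0 ≤ w k) (hws : Summable w)
    {f : ι → Matrix m n ℝ} {lo hi : ℝ} (hf : ∀ k i j, f k i j ∈ Icc lo hi) (i : m) (j : n) :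
    (∑' k, w k • f k) i j ∈ Icc ((∑' k, w k) * lo) ((∑' k, w k) * hi) := by
  have hs : Summable (fun k => w k • f k) :=
    Pi.summable.2 fun i => Pi.summable.2 fun j => summable_mul_of_mem_Icc hw hws (hf · i j)
  have happly : (∑' k, w k • f k) i j = ∑' k, w k * f k i j :=
    (congrFun (tsum_apply hs (x := i)) j).trans (tsum_apply (Pi.summable.1 hs i))
  rw [happly]
  exact tsum_mul_mem_Icc hw hws (hf · i j)

variable {n : Type*} [Fintype n] [DecidableEq n]

lemma mul_apply_mem_Icc_of_mem_rowStochastic {P S : Matrix n n ℝ} (hP : P ∈ rowStochastic ℝ n)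
    {lo hi : ℝ} (hS : ∀ a b, S a b ∈ Icc lo hi) (i j : n) : (P * S) i j ∈ Icc lo hi := by
  have hsum : ∑ a, P i a = 1 := sum_row_of_mem_rowStochastic hP i
  rw [mul_apply]
  constructor
  · calc lo = ∑ a, P i a * lo := by rw [← Finset.sum_mul, hsum, one_mul]
      _ ≤ ∑ a, P i a * S a j := Finset.sum_le_sum fun a _ =>
          mul_le_mul_of_nonneg_left (hS a j).1 (nonneg_of_mem_rowStochastic hP)
  · calc ∑ a, P i a * S a j ≤ ∑ a, P i a * hi := Finset.sum_le_sum fun a _ =>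
          mul_le_mul_of_nonneg_left (hS a j).2 (nonneg_of_mem_rowStochastic hP)
      _ = hi := by rw [← Finset.sum_mul, hsum, one_mul]

lemma mul_apply_mem_Icc_of_mem_colStochastic {S Q : Matrix n n ℝ} (hQ : Q ∈ colStochastic ℝ n)
    {lo hi : ℝ} (hS : ∀ a b, S a b ∈ Icc lo hi) (i j : n) : (S * Q) i j ∈ Icc lo hi := by
  rw [← transpose_apply (S * Q), transpose_mul]
  exact mul_apply_mem_Icc_of_mem_rowStochastic
    (transpose_mem_rowStochastic_iff_mem_colStochastic.2 hQ) (fun a b => hS b a) j i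

lemma mem_doublyStochastic_of_isSymm {M : Matrix n n ℝ} (hM : M.IsSymm) (h0 : ∀ i j, 0 ≤ M i j)
    (h1 : ∀ i, ∑ j, M i j = 1) : M ∈ doublyStochastic ℝ n := by
  refine mem_doublyStochastic_iff_sum.2 ⟨h0, h1, fun j => ?_⟩
  simpa only [← hM.apply] using h1 j

lemma mul_mul_apply_mem_Icc {P S Q : Matrix n n ℝ} (hP : P ∈ rowStochastic ℝ n)
    (hQ : Q ∈ colStochastic ℝ n) {lo hi : ℝ} (hS : ∀ a b, S a b ∈ Icc lo hi) (i j : n) :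
    (P * S * Q) i j ∈ Icc lo hi :=
  mul_apply_mem_Icc_of_mem_colStochastic hQ (mul_apply_mem_Icc_of_mem_rowStochastic hP hS) i j

lemma one_sub_smul_mul_apply_sub_le {P T : Matrix n n ℝ} (hP : P ∈ rowStochastic ℝ n) {r : ℝ}
    (hr : 0 ≤ r) {lo hi : ℝ} (hT : ∀ a b, T a b ∈ Icc lo hi) (i j k l : n) :
    ((1 - r • P) * T) i j - ((1 - r • P) * T) k l ≤ (1 + r) * (hi - lo) := by
  have hPT := mul_apply_mem_Icc_of_mem_rowStochastic hP hT
  have hr' : r * ((P * T) k l - (P * T) i j) ≤ r * (hi - lo) :=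
    mul_le_mul_of_nonneg_left (by linarith [(hPT k l).2, (hPT i j).1]) hr
  simp only [sub_mul, one_mul, smul_mul_assoc, sub_apply, smul_apply, smul_eq_mul]
  linarith [(hT i j).2, (hT k l).1]



lemma smul_pow_succ_mul_mul_smul_pow (ρ : ℝ) (M S : Matrix n n ℝ) (k : ℕ) :
    (ρ • M) ^ (k + 1) * S * (ρ • M) ^ k = ρ ^ (2 * k + 1) • (M ^ (k + 1) * S * M ^ k) := by
  rw [smul_pow, smul_pow, smul_mul_assoc, smul_mul_assoc, mul_smul_comm, smul_smul, ← pow_add]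
  ring_nf

lemma tsum_pow_succ_mul_mul_pow_apply_mem_Icc {M S : Matrix n n ℝ}
    (hM : M ∈ doublyStochastic ℝ n) {ρ : ℝ} (h0 : 0 ≤ ρ) (h1 : ρ < 1) {lo hi : ℝ}
    (hS : ∀ a b, S a b ∈ Icc lo hi) (i j : n) :
    (∑' k : ℕ, (ρ • M) ^ (k + 1) * S * (ρ • M) ^ k) i j
      ∈ Icc (ρ / (1 - ρ ^ 2) * lo) (ρ / (1 - ρ ^ 2) * hi) := by
  have hM' := mem_doublyStochastic_iff_mem_rowStochastic_and_mem_colStochastic.1 hM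
  have hgeo := hasSum_pow_two_mul_add_one h0 h1
  simp only [smul_pow_succ_mul_mul_smul_pow]
  rw [← hgeo.tsum_eq]
  exact tsum_smul_apply_mem_Icc (fun k => by positivity) hgeo.summable
    (fun k => mul_mul_apply_mem_Icc (pow_mem hM'.1 (k + 1)) (pow_mem hM'.2 k) hS) i j

lemma one_sub_sq_mul_tsum_apply_sub_le {M S : Matrix n n ℝ} (hM : M ∈ doublyStochastic ℝ n)
    {ρ : ℝ} (h0 : 0 ≤ ρ) (h1 : ρ < 1) {lo hi : ℝ} (hS : ∀ a b, S a b ∈ Icc lo hi) (i j k l : n) :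
    ((1 - (ρ • M) ^ 2 : Matrix n n ℝ) * ∑' k : ℕ, (ρ • M) ^ (k + 1) * S * (ρ • M) ^ k) i j
      - ((1 - (ρ • M) ^ 2 : Matrix n n ℝ) * ∑' k : ℕ, (ρ • M) ^ (k + 1) * S * (ρ • M) ^ k) k l
      ≤ (1 + ρ ^ 2) * (ρ / (1 - ρ ^ 2) * hi - ρ / (1 - ρ ^ 2) * lo) := by
  rw [smul_pow]
  exact one_sub_smul_mul_apply_sub_le
    (pow_mem (mem_doublyStochastic_iff_mem_rowStochastic_and_mem_colStochastic.1 hM).1 2)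
    (sq_nonneg ρ) (tsum_pow_succ_mul_mul_pow_apply_mem_Icc hM h0 h1 hS) i j k l

end Matrix

theorem separability_sufficient_condition_general {N : ℕ}
    (Abar : Matrix (Fin N) (Fin N) ℝ)
    (hnonneg : ∀ i j, 0 ≤ Abar i j)
    (hsymm : Abar.IsSymm)
    (hstoch : ∀ i, ∑ j, Abar i j = 1)
    (ρ : ℝ) (hρ0 : 0 < ρ) (hρ1 : ρ < 1)
    (A : Matrix (Fin N) (Fin N) ℝ) (hA : A = ρ • Abar)
    (σ2gap β : ℝ) (hσ2 : 0 < σ2gap)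
    (Sbar : Matrix (Fin N) (Fin N) ℝ)
    (oscS : ℝ)
    (hoscS : ∀ i j k l, Sbar i j - Sbar k l ≤ oscS)
    (Amin : ℝ)
    (hcond : oscS / σ2gap ≤ Amin * (1 - ρ ^ 2) / (2 * ρ * (ρ ^ 2 + 1)))
    (E : Matrix (Fin N) (Fin N) ℝ)
    (hE : E = (1 / σ2gap) • ((β * ρ) • onesMat N
        + (1 - A ^ 2) * ∑' i : ℕ, A ^ (i + 1) * Sbar * A ^ i)) :
    ∀ i j k l, i ≠ j → k ≠ l → E i j - E k l ≤ Amin / 2 := by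
  intro i j k l _ _
  have : Nonempty (Fin N) := ⟨i⟩
  obtain ⟨lo, hlo⟩ := exists_forall_mem_Icc_of_forall_sub_le (Function.uncurry Sbar)
    fun x y => hoscS x.1 x.2 y.1 y.2
  have hosc := one_sub_sq_mul_tsum_apply_sub_le (S := Sbar)
    (mem_doublyStochastic_of_isSymm hsymm hnonneg hstoch) hρ0.le hρ1 (fun a b => hlo (a, b)) i j k l
  have h1ρ2 : 0 < 1 - ρ ^ 2 := by nlinarith
  subst hA hE
  simp only [Matrix.smul_apply, Matrix.add_apply, smul_eq_mul, onesMat, of_apply]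
  rw [← mul_sub, add_sub_add_left_eq_sub]
  calc _ ≤ 1 / σ2gap * ((1 + ρ ^ 2) * (ρ / (1 - ρ ^ 2) * (lo + oscS) - ρ / (1 - ρ ^ 2) * lo)) := by
        gcongr
    _ = oscS / σ2gap * (2 * ρ * (ρ ^ 2 + 1)) / (2 * (1 - ρ ^ 2)) := by field_simp; ring
    _ ≤ Amin * (1 - ρ ^ 2) / (2 * (1 - ρ ^ 2)) :=
        div_le_div_of_nonneg_right ((le_div_iff₀ (by positivity)).1 hcond) (by positivity)
    _ = Amin / 2 := by field_simp

theorem separability_sufficient_condition {N : ℕ}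
    (Abar : Matrix (Fin N) (Fin N) ℝ)
    (hnonneg : ∀ i j, 0 ≤ Abar i j)
    (hsymm : Abar.IsSymm)
    (hstoch : ∀ i, ∑ j, Abar i j = 1)
    (ρ : ℝ) (hρ0 : 0 < ρ) (hρ1 : ρ < 1)
    (A : Matrix (Fin N) (Fin N) ℝ) (hA : A = ρ • Abar)
    (σ2gap β : ℝ) (hσ2 : 0 < σ2gap)
    (Sbar : Matrix (Fin N) (Fin N) ℝ) (hSbar : Sbar.IsSymm)
    (oscS : ℝ)
    (hoscS : ∀ i j k l, Sbar i j - Sbar k l ≤ oscS)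
    (Amin : ℝ) (hAmin_pos : 0 < Amin)
    (hAmin : ∀ i j, A i j ≠ 0 → Amin ≤ A i j)
    (hcond : oscS / σ2gap ≤ Amin * (1 - ρ ^ 2) / (2 * ρ * (ρ ^ 2 + 1)))
    (E : Matrix (Fin N) (Fin N) ℝ)
    (hE : E = (1 / σ2gap) • ((β * ρ) • onesMat N
        + (1 - A ^ 2) * ∑' i : ℕ, A ^ (i + 1) * Sbar * A ^ i)) :
    ∀ i j k l, i ≠ j → k ≠ l → E i j - E k l ≤ Amin / 2 :=
  separability_sufficient_condition_general Abar hnonneg hsymm hstoch ρ hρ0 hρ1 A hA σ2gap β hσ2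
    Sbar oscS hoscS Amin hcond E hE
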